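/- Let k ≥ 2 be an integer and Γ ⊆ ℤ^k a finite nonempty set such that for every i ∈ {1,…,k} the i-th coordinate projection π_i(Γ) has more than one element (i.e., no coordinate is constant on Γ). Then H(Γ) ≥ log(k/(k−1)^{(k−1)/k}). -/

import Mathlib

/-! A minimal subset `S ⊆ Γ` on which no coordinate is constant has at most `k` points: each
point is indispensable for some coordinate, and if two points were indispensable for the same
coordinate, any third point would force that coordinate to be constant on `S`. Under the uniform
distribution on `S`, every coordinate takes some value with probability `s / |S|`, `1 ≤ s < |S|`,
hence in `[1/k, 1 - 1/k]`. Lumping the remaining values together (subadditivity of `-x log x`)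
bounds each marginal entropy below by the binary entropy `h(1/k) = log (k / (k-1)^((k-1)/k))`. -/

open scoped BigOperators
open Classical

noncomputable section

namespace SlicePaper

/-- Shannon entropy of the `i`-th coordinate marginal of a distribution `p` on `Δ`. -/
def margEnt {ι : Type*} [Fintype ι] (Δ : Finset (ι → ℤ)) (p : (ι → ℤ) → ℝ) (i : ι) : ℝ :=
  -∑ α ∈ Δ.image (fun γ => γ i),
      (∑ γ ∈ Δ.filter (fun γ => γ i = α), p γ) *
        Real.log (∑ γ ∈ Δ.filter (fun γ => γ i = α), p γ)

/-- The entropy `H(Δ)` of a finite set of integer tuples. -/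
def HSet {ι : Type*} [Fintype ι] (Δ : Finset (ι → ℤ)) : ℝ :=
  sSup {e : ℝ | ∃ p : (ι → ℤ) → ℝ, (∀ γ, 0 ≤ p γ) ∧ (∀ γ, p γ ≠ 0 → γ ∈ Δ) ∧
    (∑ γ ∈ Δ, p γ) = 1 ∧ e = ⨅ i, margEnt Δ p i}

/-- Maximal elements of `Δ` w.r.t. the product of the linear orders `σ i`. -/
def maxElems {ι : Type*} [Fintype ι] (σ : ι → LinearOrder ℤ) (Δ : Finset (ι → ℤ)) :
    Finset (ι → ℤ) :=
  Δ.filter (fun γ => ∀ δ ∈ Δ, (∀ i, (σ i).le (γ i) (δ i)) → γ = δ)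

/-- `ξ k = log (k / (k-1)^((k-1)/k))`. -/
def xi (k : ℕ) : ℝ :=
  Real.log ((k : ℝ) / ((k : ℝ) - 1) ^ (((k : ℝ) - 1) / (k : ℝ)))

/-- Slice rank of a coefficient array `c`. -/
def sliceRank {k : ℕ} (F : Type*) [Field F] (τ : Fin k → Type*) [∀ i, Fintype (τ i)]
    (c : (∀ i, τ i) → F) : ℕ :=
  sInf {r : ℕ | ∃ j : Fin r → Fin k, ∃ a : ∀ l : Fin r, τ (j l) → F,
    ∃ b : ∀ l : Fin r, (((i : {i : Fin k // i ≠ j l}) → τ i.1) → F),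
    ∀ s : ∀ i, τ i, c s = ∑ l : Fin r, a l (s (j l)) * b l (fun i => s i.1)}

/-- `n`-th tensor power of a coefficient array. -/
def tpow {k : ℕ} {F : Type*} [Field F] {τ : Fin k → Type*} (c : (∀ i, τ i) → F) (n : ℕ) :
    (∀ i, Fin n → τ i) → F :=
  fun u => ∏ m : Fin n, c (fun i => u i m)

/-- Support of a coefficient array, as a finite set of integer tuples. -/
def support {k : ℕ} {F : Type*} [Field F] (S : Fin k → Finset ℤ)
    (c : (∀ i, {x : ℤ // x ∈ S i}) → F) : Finset (Fin k → ℤ) :=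
  (Finset.univ.filter (fun s : ∀ i, {x : ℤ // x ∈ S i} => c s ≠ 0)).image
    (fun s i => (s i : ℤ))

/-- Section `Γ_I^x`: restrictions to coordinates outside `I` of the γ ∈ Γ agreeing with x on I. -/
def sect {k : ℕ} (Γ : Finset (Fin k → ℤ)) (I : Finset (Fin k)) (x : Fin k → ℤ) :
    Finset ({i : Fin k // i ∉ I} → ℤ) :=
  (Γ.filter (fun γ => ∀ i ∈ I, γ i = x i)).image (fun γ i => γ i.1)

/-- Section along a single coordinate. -/
def sect1 {k : ℕ} (Γ : Finset (Fin k → ℤ)) (i : Fin k) (a : ℤ) :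
    Finset ({j : Fin k // j ≠ i} → ℤ) :=
  (Γ.filter (fun γ => γ i = a)).image (fun γ j => γ j.1)

/-- Trifferent set of strings. -/
def trifferent {n : ℕ} {α : Type*} (A : Finset (Fin n → α)) : Prop :=
  ∀ x ∈ A, ∀ y ∈ A, ∀ z ∈ A, x ≠ y → y ≠ z → x ≠ z →
    ∃ i, x i ≠ y i ∧ y i ≠ z i ∧ x i ≠ z i

/-- The cube root of unity `ω = e^{2πi/3}`. -/
def w : ℂ := Complex.exp (2 * Real.pi * Complex.I / 3)

/-- The tensor `f_{x,y}(z,t)` used for the trifference problem. -/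
def f {n : ℕ} (x y z t : Fin n → ℂ) : ℂ :=
  ∏ i, (x i + y i + z i) * (x i + y i + t i)

/-- Monomial functions `g_{α,β}`. -/
def g {n : ℕ} (α β : Fin n → ℕ) : (Fin n → ℂ) × (Fin n → ℂ) → ℂ :=
  fun q => ∏ i, (q.1 i + q.2 i) ^ α i * (q.1 i * q.2 i) ^ β i

open Finset Real

lemma negMulLog_sum_le {α : Type*} (T : Finset α) (f : α → ℝ) (hf : ∀ a ∈ T, 0 ≤ f a) :
    negMulLog (∑ a ∈ T, f a) ≤ ∑ a ∈ T, negMulLog (f a) := by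
  have hterm : ∀ a ∈ T, -(f a * log (∑ b ∈ T, f b)) ≤ negMulLog (f a) := fun a ha => by
    rcases (hf a ha).eq_or_lt with h | h
    · simp [← h]
    · rw [negMulLog, neg_mul, neg_le_neg_iff]
      exact mul_le_mul_of_nonneg_left (log_le_log h (single_le_sum hf ha)) h.le
  calc negMulLog (∑ a ∈ T, f a) = ∑ a ∈ T, -(f a * log (∑ b ∈ T, f b)) := by
        rw [negMulLog, sum_neg_distrib, ← sum_mul, neg_mul]
    _ ≤ _ := sum_le_sum hterm

lemma binEntropy_le_of_mem_Icc {a q : ℝ} (ha : 0 ≤ a) (ha' : a ≤ 2⁻¹) (hq : a ≤ q)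
    (hq' : q ≤ 1 - a) : binEntropy a ≤ binEntropy q := by
  have hmono := binEntropy_strictMonoOn.monotoneOn (a := a)
  rcases le_total q 2⁻¹ with h | h
  · exact hmono ⟨ha, ha'⟩ ⟨ha.trans hq, h⟩ hq
  · rw [← binEntropy_one_sub q]
    exact hmono ⟨ha, ha'⟩ ⟨by linarith, by linarith⟩ (by linarith)

lemma xi_eq_binEntropy {k : ℕ} (hk : 2 ≤ k) : xi k = binEntropy (k : ℝ)⁻¹ := by
  have hk' : (2 : ℝ) ≤ k := by exact_mod_cast hk
  have hk1 : (0 : ℝ) < k - 1 := by linarith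
  have hsub : 1 - (k : ℝ)⁻¹ = (k - 1) / k := by field_simp
  rw [xi, log_div (by positivity) (by positivity), log_rpow hk1, binEntropy, inv_inv, hsub,
    log_inv, log_div hk1.ne' (by positivity)]
  field_simp
  ring

section Combinatorics

variable {ι α : Type*} [DecidableEq α] [DecidableEq (ι → α)]

lemma card_image_le_one_of_erase {S : Finset (ι → α)} (hS : 3 ≤ #S) {i : ι} {γ δ : ι → α}
    (hγ : γ ∈ S) (hγδ : γ ≠ δ) (hγi : #((S.erase γ).image fun η => η i) ≤ 1)
    (hδi : #((S.erase δ).image fun η => η i) ≤ 1) :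
    #(S.image fun η => η i) ≤ 1 := by
  have agree : ∀ {ε η₁ η₂}, #((S.erase ε).image fun η => η i) ≤ 1 →
      η₁ ∈ S.erase ε → η₂ ∈ S.erase ε → η₁ i = η₂ i := fun hε h₁ h₂ =>
    card_le_one.mp hε _ (mem_image_of_mem _ h₁) _ (mem_image_of_mem _ h₂)
  obtain ⟨θ, hθ⟩ : ((S.erase γ).erase δ).Nonempty := by
    rw [← card_pos]
    have := pred_card_le_card_erase (s := S.erase γ) (a := δ)
    have := card_erase_of_mem hγ
    omega
  have hθγ : θ ∈ S.erase γ := mem_of_mem_erase hθ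
  have hθδ : θ ∈ S.erase δ := mem_erase.mpr ⟨ne_of_mem_erase hθ, mem_of_mem_erase hθγ⟩
  have hall : ∀ η ∈ S, η i = θ i := fun η hη => by
    by_cases hηγ : η = γ
    · subst hηγ
      exact agree hδi (mem_erase.mpr ⟨hγδ, hη⟩) hθδ
    · exact agree hγi (mem_erase.mpr ⟨hηγ, hη⟩) hθγ
  refine card_le_one.mpr fun a ha b hb => ?_
  obtain ⟨η₁, hη₁, rfl⟩ := mem_image.mp ha
  obtain ⟨η₂, hη₂, rfl⟩ := mem_image.mp hb
  rw [hall η₁ hη₁, hall η₂ hη₂]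

lemma card_le_of_forall_erase [Fintype ι] (hι : 2 ≤ Fintype.card ι) {S : Finset (ι → α)}
    (hS : ∀ i, 1 < #(S.image fun η => η i))
    (hmin : ∀ γ ∈ S, ∃ i, #((S.erase γ).image fun η => η i) ≤ 1) :
    #S ≤ Fintype.card ι := by
  by_contra! hlt
  choose c hc using hmin
  obtain ⟨⟨γ, hγ⟩, ⟨δ, hδ⟩, hγδ, hcγδ⟩ :=
    Fintype.exists_ne_map_eq_of_card_lt (fun η : S => c η η.2) (by simpa using hlt)
  exact (hS _).not_ge <| card_image_le_one_of_erase (by omega) hγ (by simpa using hγδ) (hc γ hγ)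
    (hcγδ ▸ hc δ hδ)

lemma exists_subset_card_le [Fintype ι] (hι : 2 ≤ Fintype.card ι) {Γ : Finset (ι → α)}
    (hΓ : ∀ i, 1 < #(Γ.image fun γ => γ i)) :
    ∃ S ⊆ Γ, (∀ i, 1 < #(S.image fun γ => γ i)) ∧ #S ≤ Fintype.card ι := by
  obtain ⟨S, hS, hmin⟩ := exists_min_image
    (Γ.powerset.filter fun S => ∀ i, 1 < #(S.image fun γ => γ i)) card
    ⟨Γ, mem_filter.mpr ⟨mem_powerset_self Γ, hΓ⟩⟩
  obtain ⟨hSΓ, hSi⟩ := mem_filter.mp hS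
  refine ⟨S, mem_powerset.mp hSΓ, hSi, card_le_of_forall_erase hι hSi fun γ hγ => ?_⟩
  by_contra! herase
  have := hmin (S.erase γ) (mem_filter.mpr
    ⟨mem_powerset.mpr ((erase_subset γ S).trans (mem_powerset.mp hSΓ)), herase⟩)
  exact (card_erase_lt_of_mem hγ).not_ge this

end Combinatorics

section Entropy

variable {ι : Type*} [Fintype ι] {Δ : Finset (ι → ℤ)} {p : (ι → ℤ) → ℝ}

lemma margEnt_eq_sum_negMulLog (Δ : Finset (ι → ℤ)) (p : (ι → ℤ) → ℝ) (i : ι) :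
    margEnt Δ p i = ∑ α ∈ Δ.image (fun γ => γ i),
      negMulLog (∑ γ ∈ Δ.filter (fun γ => γ i = α), p γ) := by
  simp only [margEnt, negMulLog, neg_mul, sum_neg_distrib]

lemma margEnt_le_card (hp : ∀ γ, 0 ≤ p γ) (i : ι) : margEnt Δ p i ≤ #Δ :=
  calc margEnt Δ p i ≤ ∑ _α ∈ Δ.image (fun γ => γ i), (1 : ℝ) := by
        rw [margEnt_eq_sum_negMulLog]
        refine sum_le_sum fun α _ => ?_
        have hq : 0 ≤ ∑ γ ∈ Δ.filter (fun γ => γ i = α), p γ := sum_nonneg fun γ _ => hp γ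
        linarith [negMulLog_le_one_sub_self hq]
    _ ≤ #Δ := by simpa using card_image_le

lemma binEntropy_le_margEnt (hp : ∀ γ, 0 ≤ p γ) (hsum : ∑ γ ∈ Δ, p γ = 1) {i : ι} {α : ℤ}
    (hα : α ∈ Δ.image (fun γ => γ i)) :
    binEntropy (∑ γ ∈ Δ.filter (fun γ => γ i = α), p γ) ≤ margEnt Δ p i := by
  set q : ℤ → ℝ := fun β => ∑ γ ∈ Δ.filter (fun γ => γ i = β), p γ
  have hq : ∀ β, 0 ≤ q β := fun β => sum_nonneg fun γ _ => hp γ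
  have hrest : ∑ β ∈ (Δ.image fun γ => γ i).erase α, q β = 1 - q α := by
    rw [← hsum, ← sum_fiberwise_of_maps_to (fun γ hγ => mem_image_of_mem (fun γ => γ i) hγ) p,
      ← add_sum_erase _ _ hα]
    ring
  calc binEntropy (q α) = negMulLog (q α) + negMulLog (1 - q α) :=
        binEntropy_eq_negMulLog_add_negMulLog_one_sub _
    _ ≤ negMulLog (q α) + ∑ β ∈ (Δ.image fun γ => γ i).erase α, negMulLog (q β) := by
        rw [← hrest]
        exact add_le_add_right (negMulLog_sum_le _ _ fun β _ => hq β) _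
    _ = margEnt Δ p i := by
        rw [add_sum_erase _ (fun β => negMulLog (q β)) hα, margEnt_eq_sum_negMulLog]

lemma iInf_margEnt_le_HSet [Nonempty ι] (hp : ∀ γ, 0 ≤ p γ) (hsupp : ∀ γ, p γ ≠ 0 → γ ∈ Δ)
    (hsum : ∑ γ ∈ Δ, p γ = 1) : ⨅ i, margEnt Δ p i ≤ HSet Δ := by
  refine le_csSup ⟨#Δ, ?_⟩ ⟨p, hp, hsupp, hsum, rfl⟩
  rintro e ⟨p', hp', -, -, rfl⟩
  exact (ciInf_le (Set.finite_range _).bddBelow (Classical.arbitrary ι)).trans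
    (margEnt_le_card hp' _)

end Entropy

section Uniform

variable {ι : Type*} [Fintype ι] {S Δ : Finset (ι → ℤ)}

def uniformOn (S : Finset (ι → ℤ)) (γ : ι → ℤ) : ℝ := if γ ∈ S then (#S : ℝ)⁻¹ else 0

lemma uniformOn_nonneg (γ : ι → ℤ) : 0 ≤ uniformOn S γ := by
  unfold uniformOn; split_ifs <;> positivity

lemma mem_of_uniformOn_ne_zero {γ : ι → ℤ} (h : uniformOn S γ ≠ 0) : γ ∈ S := by
  by_contra hγ
  exact h (if_neg hγ)

lemma sum_filter_uniformOn (hS : S ⊆ Δ) (P : (ι → ℤ) → Prop) [DecidablePred P] :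
    ∑ γ ∈ Δ.filter P, uniformOn S γ = #(S.filter P) / #S := by
  have hinter : Δ.filter P ∩ S = S.filter P := by
    ext γ; simp only [mem_inter, mem_filter]; constructor
    · rintro ⟨⟨-, hP⟩, hγ⟩; exact ⟨hγ, hP⟩
    · rintro ⟨hγ, hP⟩; exact ⟨⟨hS hγ, hP⟩, hγ⟩
  simp only [uniformOn]
  rw [sum_ite_mem, hinter, sum_const, nsmul_eq_mul, div_eq_mul_inv]

lemma sum_uniformOn (hS : S ⊆ Δ) (hne : S.Nonempty) : ∑ γ ∈ Δ, uniformOn S γ = 1 := by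
  simpa [hne.card_pos.ne'] using sum_filter_uniformOn hS (fun _ => True)

lemma inv_le_div_and_div_le_one_sub_inv {s m n : ℕ} (hs : 0 < s) (hsm : s < m) (hmn : m ≤ n) :
    (n : ℝ)⁻¹ ≤ s / m ∧ (s : ℝ) / m ≤ 1 - (n : ℝ)⁻¹ := by
  have hm : (0 : ℝ) < m := by exact_mod_cast hs.trans hsm
  have hnm : (n : ℝ)⁻¹ ≤ (m : ℝ)⁻¹ := inv_anti₀ hm (by exact_mod_cast hmn)
  have hs' : (1 : ℝ) ≤ s := by exact_mod_cast hs
  have hsm' : (s : ℝ) ≤ m - 1 := by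
    have : (s : ℝ) + 1 ≤ m := by exact_mod_cast hsm
    linarith
  constructor
  · calc (n : ℝ)⁻¹ ≤ 1 / m := by rwa [one_div]
      _ ≤ s / m := div_le_div_of_nonneg_right hs' hm.le
  · calc (s : ℝ) / m ≤ (m - 1) / m := div_le_div_of_nonneg_right hsm' hm.le
      _ = 1 - (m : ℝ)⁻¹ := by field_simp
      _ ≤ 1 - (n : ℝ)⁻¹ := by linarith

lemma binEntropy_inv_le_margEnt_uniformOn {n : ℕ} (hn : 2 ≤ n) (hS : S ⊆ Δ) (hSn : #S ≤ n)
    {i : ι} (hi : 1 < #(S.image fun γ => γ i)) :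
    binEntropy (n : ℝ)⁻¹ ≤ margEnt Δ (uniformOn S) i := by
  obtain ⟨γ, hγ⟩ : S.Nonempty := (card_pos.mp (zero_lt_one.trans hi)).of_image
  have hpos : 0 < #(S.filter fun η => η i = γ i) := card_pos.mpr ⟨γ, mem_filter.mpr ⟨hγ, rfl⟩⟩
  have hlt : #(S.filter fun η => η i = γ i) < #S := by
    obtain ⟨_, hβ, hβγ⟩ := exists_mem_ne hi (γ i)
    obtain ⟨η, hη, rfl⟩ := mem_image.mp hβ
    exact card_lt_card (filter_ssubset.mpr ⟨η, hη, hβγ⟩)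
  obtain ⟨hlow, hupp⟩ := inv_le_div_and_div_le_one_sub_inv hpos hlt hSn
  have hhalf : (n : ℝ)⁻¹ ≤ 2⁻¹ := inv_anti₀ two_pos (by exact_mod_cast hn)
  rw [← sum_filter_uniformOn hS] at hlow hupp
  exact (binEntropy_le_of_mem_Icc (by positivity) hhalf hlow hupp).trans
    (binEntropy_le_margEnt uniformOn_nonneg (sum_uniformOn hS ⟨γ, hγ⟩)
      (mem_image_of_mem _ (hS hγ)))

end Uniform

theorem stmt9_general {k : ℕ} (hk : 2 ≤ k) (Γ : Finset (Fin k → ℤ))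
    (h : ∀ i : Fin k, 1 < (Γ.image (fun γ => γ i)).card) :
    xi k ≤ HSet Γ := by
  have : Nonempty (Fin k) := ⟨⟨0, by omega⟩⟩
  obtain ⟨S, hSΓ, hS, hSk⟩ := exists_subset_card_le (by simpa using hk) h
  have hSne : S.Nonempty := (card_pos.mp (zero_lt_one.trans (hS (Classical.arbitrary _)))).of_image
  rw [xi_eq_binEntropy hk]
  calc binEntropy (k : ℝ)⁻¹ ≤ ⨅ i, margEnt Γ (uniformOn S) i :=
        le_ciInf fun i => binEntropy_inv_le_margEnt_uniformOn hk hSΓ (by simpa using hSk) (hS i)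
    _ ≤ HSet Γ := iInf_margEnt_le_HSet uniformOn_nonneg
        (fun γ hγ => hSΓ (mem_of_uniformOn_ne_zero hγ)) (sum_uniformOn hSΓ hSne)

/-- if no coordinate is constant on a finite nonempty `Γ ⊆ ℤ^k`, then
`H(Γ) ≥ log(k/(k-1)^((k-1)/k))`. -/
theorem stmt9 {k : ℕ} (hk : 2 ≤ k) (Γ : Finset (Fin k → ℤ)) (hne : Γ.Nonempty)
    (h : ∀ i : Fin k, 1 < (Γ.image (fun γ => γ i)).card) :
    xi k ≤ HSet Γ :=
  stmt9_general hk Γ h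

end SlicePaper
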